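/- arXiv:2210.07051 — 2 statements merged into one kernel-verified Lean document; each statement's English description precedes it below -/
import Mathlib

section
/- Let D be a finite set with |D| = n ≥ 1 and let d₁, …, d_m (m ≤ n) be pairwise distinct elements of D. Then there exists a function e : D → ℤ with 1 ≤ e(d) ≤ n for all d ∈ D such that e(d_{i+1}) ≥ e(d_i) + 1 for every 1 ≤ i < m; consequently, for every pair (d, d') ∈ D × D, the Miller–Tucker–Zemlin inequality e(d) − e(d') + n·g ≤ n − 1 is satisfied whenever g = 0, and it is also satisfied with g = 1 for each consecutive pair (d_i, d_{i+1}) of the sequence. -/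
/-! Number the destinations of the route by their position: `e(dᵢ) = i` (counting from 1), and
`e = 1` off the route. Injectivity of the route makes this well defined and forces `m ≤ n`, so
`e` takes values in `[1, n]`; consecutive stops then differ by exactly one, which is the MTZ
inequality with `g = 1`, while any two values in `[1, n]` differ by at most `n - 1`, which is
the inequality with `g = 0`. -/

namespace MTZ

variable {D : Type*} {m : ℕ}

noncomputable def routePosition (d : Fin m → D) : D → ℤ :=
  Function.extend d (fun i => (i : ℤ) + 1) 1

theorem routePosition_apply {d : Fin m → D} (hd : Function.Injective d) (i : Fin m) :
    routePosition d (d i) = (i : ℤ) + 1 :=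
  hd.extend_apply _ _ i

theorem routePosition_of_not_mem_range {d : Fin m → D} {x : D} (hx : ¬∃ i, d i = x) :
    routePosition d x = 1 :=
  Function.extend_apply' _ _ _ hx

theorem one_le_routePosition (d : Fin m → D) (x : D) : 1 ≤ routePosition d x := by
  by_cases hx : ∃ i, d i = x
  · obtain ⟨i, rfl⟩ := hx
    classical
    rw [routePosition, Function.extend_def, dif_pos ⟨i, rfl⟩]
    omega
  · rw [routePosition_of_not_mem_range hx]

theorem routePosition_le_card [Fintype D] {d : Fin m → D} (hd : Function.Injective d) (x : D) :
    routePosition d x ≤ Fintype.card D := by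
  by_cases hx : ∃ i, d i = x
  · obtain ⟨i, rfl⟩ := hx
    have hm : m ≤ Fintype.card D := by
      simpa using Fintype.card_le_of_injective d hd
    rw [routePosition_apply hd]
    omega
  · have hD : 0 < Fintype.card D := Fintype.card_pos_iff.mpr ⟨x⟩
    rw [routePosition_of_not_mem_range hx]
    omega

theorem routePosition_succ {d : Fin m → D} (hd : Function.Injective d) (i : Fin m)
    (h : (i : ℕ) + 1 < m) : routePosition d (d ⟨(i : ℕ) + 1, h⟩) = routePosition d (d i) + 1 := by
  rw [routePosition_apply hd, routePosition_apply hd]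
  push_cast
  rfl

end MTZ

open MTZ in
theorem mtz_valid_assignment_general {D : Type*} [Fintype D]
    (m : ℕ)
    (d : Fin m → D) (hd : Function.Injective d) :
    ∃ e : D → ℤ,
      (∀ x : D, 1 ≤ e x ∧ e x ≤ (Fintype.card D : ℤ)) ∧
      (∀ (i : Fin m) (h : (i : ℕ) + 1 < m), e (d i) + 1 ≤ e (d ⟨(i : ℕ) + 1, h⟩)) ∧
      (∀ x y : D,
        e x - e y + (Fintype.card D : ℤ) * 0 ≤ (Fintype.card D : ℤ) - 1) ∧
      (∀ (i : Fin m) (h : (i : ℕ) + 1 < m),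
        e (d i) - e (d ⟨(i : ℕ) + 1, h⟩) + (Fintype.card D : ℤ) * 1
          ≤ (Fintype.card D : ℤ) - 1) := by
  refine ⟨routePosition d, fun x => ⟨one_le_routePosition d x, routePosition_le_card hd x⟩,
    fun i h => (routePosition_succ hd i h).ge, fun x y => ?_, fun i h => ?_⟩
  · have hx := routePosition_le_card hd x
    have hy := one_le_routePosition d y
    linarith
  · have := routePosition_succ hd i h
    linarith

/-- Validity of the MTZ constraints: every sequence of `m ≤ n = |D|` pairwise
distinct destinations admits a potential `e : D → ℤ` with values in `[1, n]`
increasing strictly along the sequence; consequently the MTZ inequality holds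
with `g = 0` for every pair, and with `g = 1` for every consecutive pair. -/
theorem mtz_valid_assignment {D : Type*} [Fintype D]
    (hn : 1 ≤ Fintype.card D) (m : ℕ) (hm : m ≤ Fintype.card D)
    (d : Fin m → D) (hd : Function.Injective d) :
    ∃ e : D → ℤ,
      (∀ x : D, 1 ≤ e x ∧ e x ≤ (Fintype.card D : ℤ)) ∧
      (∀ (i : Fin m) (h : (i : ℕ) + 1 < m), e (d i) + 1 ≤ e (d ⟨(i : ℕ) + 1, h⟩)) ∧
      (∀ x y : D,
        e x - e y + (Fintype.card D : ℤ) * 0 ≤ (Fintype.card D : ℤ) - 1) ∧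
      (∀ (i : Fin m) (h : (i : ℕ) + 1 < m),
        e (d i) - e (d ⟨(i : ℕ) + 1, h⟩) + (Fintype.card D : ℤ) * 1
          ≤ (Fintype.card D : ℤ) - 1) :=
  mtz_valid_assignment_general m d hd
end

section
/- Let V be a finite set of locations containing a distinguished depot d₀, let S ⊆ V with d₀ ∉ S and S nonempty, and let E ⊆ V × V be a set of directed arcs. Suppose: (i) every arc of E has both endpoints in S ∪ {d₀}; (ii) every vertex v ∈ S ∪ {d₀} has exactly one outgoing arc in E and exactly one incoming arc in E; and (iii) there exists e : V → ℤ with e(d') ≥ e(d) + 1 for every arc (d, d') ∈ E with d ≠ d₀ and d' ≠ d₀. Then E is the arc set of a single directed cycle through the depot: there is an enumeration d₁, …, d_m of all elements of S (with m = |S|) such that E = {(d₀, d₁)} ∪ {(d_i, d_{i+1}) : 1 ≤ i < m} ∪ {(d_m, d₀)}. -/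
/-!
The out-degree condition makes `E` the graph of a successor map `f` on `T = S ∪ {d₀}`, and the
in-degree condition makes `f` injective on the finite set `T`, so every vertex of `T` is periodic
under `f`. On a cycle avoiding `d₀` the potential `e` would increase strictly all the way round,
so every vertex lies on the cycle of `d₀`. Hence the minimal period of `d₀` is `|S| + 1`, and
`f d₀, f² d₀, …, f^|S| d₀` enumerates `S` in tour order.
-/

open Function Set

section Orbit

variable {α : Type*} {f : α → α} {s : Set α} {a x : α}

theorem mem_periodicPts_of_mapsTo_of_injOn (hs : s.Finite) (hmaps : MapsTo f s s)
    (hinj : InjOn f s) (hx : x ∈ s) : x ∈ periodicPts f := by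
  have : Finite s := hs
  obtain ⟨n, hn, hper⟩ := (hmaps.restrict_inj.mpr hinj).mem_periodicPts ⟨x, hx⟩
  refine mk_mem_periodicPts hn ?_
  simpa [IsPeriodicPt, IsFixedPt, hmaps.iterate_restrict] using congrArg Subtype.val hper

theorem exists_iterate_eq_of_potential (e : α → ℤ) (hmaps : MapsTo f s s)
    (he : ∀ y ∈ s, y ≠ a → f y ≠ a → e y + 1 ≤ e (f y))
    (hx : x ∈ s) (hper : x ∈ periodicPts f) : ∃ j, f^[j] x = a := by
  by_contra! hne
  have hgrow : ∀ j : ℕ, e x + j ≤ e (f^[j] x) := by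
    intro j
    induction j with
    | zero => simp
    | succ j ih =>
      have hstep := he _ (hmaps.iterate j hx) (hne j)
        (by simpa only [iterate_succ_apply'] using hne (j + 1))
      rw [iterate_succ_apply']
      push_cast
      omega
  have hq := hgrow (minimalPeriod f x)
  rw [iterate_minimalPeriod] at hq
  have := minimalPeriod_pos_of_mem_periodicPts hper
  omega

theorem exists_lt_minimalPeriod_iterate_eq (ha : a ∈ periodicPts f)
    (hx : x ∈ periodicPts f) {j : ℕ} (hj : f^[j] x = a) :
    ∃ k < minimalPeriod f a, f^[k] a = x := by
  set q := minimalPeriod f x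
  have hjq : j % q < q := Nat.mod_lt _ (minimalPeriod_pos_of_mem_periodicPts hx)
  have hback : f^[q - j % q] a = x :=
    calc f^[q - j % q] a = f^[q - j % q] (f^[j % q] x) := by rw [iterate_mod_minimalPeriod_eq, hj]
      _ = f^[q] x := by rw [← iterate_add_apply, Nat.sub_add_cancel hjq.le]
      _ = x := iterate_minimalPeriod
  exact ⟨(q - j % q) % minimalPeriod f a, Nat.mod_lt _ (minimalPeriod_pos_of_mem_periodicPts ha),
    by rw [iterate_mod_minimalPeriod_eq, hback]⟩

theorem image_range_minimalPeriod_eq [DecidableEq α] {s : Finset α} (e : α → ℤ)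
    (hmaps : MapsTo f s s) (hinj : InjOn f s) (ha : a ∈ s)
    (he : ∀ y ∈ s, y ≠ a → f y ≠ a → e y + 1 ≤ e (f y)) :
    (Finset.range (minimalPeriod f a)).image (f^[·] a) = s := by
  have hper : ∀ y ∈ s, y ∈ periodicPts f := fun y hy =>
    mem_periodicPts_of_mapsTo_of_injOn s.finite_toSet hmaps hinj hy
  ext y
  simp only [Finset.mem_image, Finset.mem_range]
  constructor
  · rintro ⟨k, -, rfl⟩
    exact hmaps.iterate k ha
  · intro hy
    obtain ⟨j, hj⟩ := exists_iterate_eq_of_potential e hmaps he hy (hper y hy)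
    exact exists_lt_minimalPeriod_iterate_eq (hper a ha) (hper y hy) hj

theorem eq_setOf_iterate_pairs [DecidableEq α] {E : Set (α × α)} {s : Finset α} {n : ℕ}
    (hE : ∀ u w, (u, w) ∈ E ↔ u ∈ s ∧ w = f u)
    (himage : (Finset.range n).image (f^[·] a) = s) :
    E = {q | ∃ k < n, q = (f^[k] a, f^[k + 1] a)} := by
  ext ⟨u, w⟩
  simp only [hE, ← himage, Finset.mem_image, Finset.mem_range, mem_ofPred_eq, Prod.mk.injEq,
    iterate_succ_apply']
  constructor
  · rintro ⟨⟨k, hk, rfl⟩, rfl⟩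
    exact ⟨k, hk, rfl, rfl⟩
  · rintro ⟨k, hk, rfl, rfl⟩
    exact ⟨⟨k, hk, rfl⟩, rfl⟩

end Orbit

section Enumeration

variable {α : Type*} {g : ℕ → α} {m : ℕ} {d : Fin m → α}

theorem injective_of_injOn_Iio_succ (hg : InjOn g (Iio (m + 1)))
    (hd : ∀ i : Fin m, d i = g (i + 1)) : Injective d := by
  intro i j hij
  rw [hd, hd] at hij
  have := hg (by simp) (by simp) hij
  omega

theorem range_eq_of_image_range_succ [DecidableEq α] {S : Finset α} (hg : InjOn g (Iio (m + 1)))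
    (himage : (Finset.range (m + 1)).image g = insert (g 0) S) (h0 : g 0 ∉ S)
    (hd : ∀ i : Fin m, d i = g (i + 1)) : range d = S := by
  ext y
  constructor
  · rintro ⟨i, rfl⟩
    have hmem : d i ∈ insert (g 0) S := by
      rw [← himage, hd]
      exact Finset.mem_image_of_mem g (by simp)
    have hne : d i ≠ g 0 := fun h => by
      rw [hd] at h
      have := hg (by simp) (by simp) h
      omega
    simpa [hne] using hmem
  · intro hy
    obtain ⟨k, hk, rfl⟩ := Finset.mem_image.mp (himage ▸ Finset.mem_insert_of_mem hy)
    have hk0 : k ≠ 0 := by rintro rfl; exact h0 hy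
    refine ⟨⟨k - 1, by simp at hk; omega⟩, ?_⟩
    exact (hd _).trans (congrArg g (Nat.sub_add_cancel (Nat.pos_of_ne_zero hk0)))

theorem setOf_consecutive_pairs_eq (hm : 0 < m) (hg : g (m + 1) = g 0)
    (hd : ∀ i : Fin m, d i = g (i + 1)) :
    {q : α × α | ∃ k < m + 1, q = (g k, g (k + 1))} =
      {(g 0, d ⟨0, hm⟩)} ∪
        {q : α × α | ∃ (i : Fin m) (h : (i : ℕ) + 1 < m), q = (d i, d ⟨(i : ℕ) + 1, h⟩)} ∪
        {(d ⟨m - 1, Nat.sub_lt hm Nat.one_pos⟩, g 0)} := by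
  have hlast : m - 1 + 1 = m := Nat.sub_add_cancel hm
  ext q
  simp only [mem_union, mem_singleton_iff, mem_ofPred_eq, hd]
  constructor
  · rintro ⟨k, hk, rfl⟩
    rcases Nat.eq_zero_or_pos k with rfl | hk0
    · exact Or.inl (Or.inl rfl)
    · rcases Nat.lt_or_ge (k + 1) (m + 1) with hkm | hkm
      · refine Or.inl (Or.inr ⟨⟨k - 1, by omega⟩, by dsimp only; omega, ?_⟩)
        simp only [Nat.sub_add_cancel hk0]
      · obtain rfl : k = m := by omega
        exact Or.inr (by rw [hlast, hg])
  · rintro ((rfl | ⟨i, hi, rfl⟩) | rfl)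
    · exact ⟨0, by omega, rfl⟩
    · exact ⟨i + 1, by omega, rfl⟩
    · exact ⟨m, by omega, by rw [hlast, hg]⟩

end Enumeration

theorem routing_single_tour_general {V : Type*} [DecidableEq V]
    (d₀ : V) (S : Finset V) (hS : S.Nonempty) (hd₀ : d₀ ∉ S)
    (E : Set (V × V))
    (hend : ∀ p ∈ E, (p.1 ∈ S ∨ p.1 = d₀) ∧ (p.2 ∈ S ∨ p.2 = d₀))
    (hout : ∀ v : V, v ∈ S ∨ v = d₀ → ∃! w : V, (v, w) ∈ E)
    (hin : ∀ v : V, v ∈ S ∨ v = d₀ → ∃! w : V, (w, v) ∈ E)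
    (e : V → ℤ)
    (hMTZ : ∀ d d', (d, d') ∈ E → d ≠ d₀ → d' ≠ d₀ → e d + 1 ≤ e d') :
    ∃ (m : ℕ) (hm : 0 < m) (d : Fin m → V),
      m = S.card ∧ Function.Injective d ∧ Set.range d = ↑S ∧
      E = {(d₀, d ⟨0, hm⟩)} ∪
            {p : V × V | ∃ (i : Fin m) (h : (i : ℕ) + 1 < m),
              p = (d i, d ⟨(i : ℕ) + 1, h⟩)} ∪
            {(d ⟨m - 1, Nat.sub_lt hm Nat.one_pos⟩, d₀)} := by
  choose! f hfE hfuniq using hout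
  set T : Finset V := insert d₀ S with hTdef
  have hT : ∀ v, v ∈ T ↔ v ∈ S ∨ v = d₀ := fun v => by simp [T, or_comm]
  have hgraph : ∀ u w, (u, w) ∈ E ↔ u ∈ T ∧ w = f u := fun u w =>
    ⟨fun h => ⟨(hT u).2 (hend _ h).1, hfuniq u (hend _ h).1 w h⟩,
      by rintro ⟨hu, rfl⟩; exact hfE u ((hT u).1 hu)⟩
  have hmaps : MapsTo f T T := fun v hv => (hT _).2 (hend _ (hfE v ((hT v).1 hv))).2
  have hinj : InjOn f T := fun u hu v hv huv =>
    (hin _ ((hT _).1 (hmaps hv))).unique (huv ▸ hfE u ((hT u).1 hu)) (hfE v ((hT v).1 hv))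
  have himage := image_range_minimalPeriod_eq e hmaps hinj (Finset.mem_insert_self d₀ S)
    fun y hy hy₀ hfy₀ => hMTZ y (f y) (hfE y ((hT y).1 hy)) hy₀ hfy₀
  have hp : minimalPeriod f d₀ = S.card + 1 := by
    rw [← Finset.card_insert_of_notMem hd₀, ← hTdef, ← himage, Finset.card_image_of_injOn
      (by rw [Finset.coe_range]; exact iterate_injOn_Iio_minimalPeriod), Finset.card_range]
  have hginj : InjOn (f^[·] d₀) (Iio (S.card + 1)) := hp ▸ iterate_injOn_Iio_minimalPeriod
  rw [hp] at himage
  refine ⟨S.card, hS.card_pos, fun i => f^[i + 1] d₀, rfl,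
    injective_of_injOn_Iio_succ hginj fun _ => rfl,
    range_eq_of_image_range_succ hginj himage hd₀ fun _ => rfl, ?_⟩
  rw [eq_setOf_iterate_pairs hgraph himage]
  exact setOf_consecutive_pairs_eq hS.card_pos (by rw [← hp, iterate_minimalPeriod]; rfl)
    fun _ => rfl

/-- Combined correctness of the routing constraints for one truck: if every
arc of `E` has both endpoints in `S ∪ {d₀}`, every such vertex has exactly one
outgoing and one incoming arc in `E`, and there is an integer potential
increasing strictly along every arc between non-depot vertices, then `E` is
the arc set of a single directed cycle through the depot visiting each
element of `S` exactly once. -/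
theorem routing_single_tour {V : Type*} [Fintype V] [DecidableEq V]
    (d₀ : V) (S : Finset V) (hS : S.Nonempty) (hd₀ : d₀ ∉ S)
    (E : Set (V × V))
    (hend : ∀ p ∈ E, (p.1 ∈ S ∨ p.1 = d₀) ∧ (p.2 ∈ S ∨ p.2 = d₀))
    (hout : ∀ v : V, v ∈ S ∨ v = d₀ → ∃! w : V, (v, w) ∈ E)
    (hin : ∀ v : V, v ∈ S ∨ v = d₀ → ∃! w : V, (w, v) ∈ E)
    (e : V → ℤ)
    (hMTZ : ∀ d d', (d, d') ∈ E → d ≠ d₀ → d' ≠ d₀ → e d + 1 ≤ e d') :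
    ∃ (m : ℕ) (hm : 0 < m) (d : Fin m → V),
      m = S.card ∧ Function.Injective d ∧ Set.range d = ↑S ∧
      E = {(d₀, d ⟨0, hm⟩)} ∪
            {p : V × V | ∃ (i : Fin m) (h : (i : ℕ) + 1 < m),
              p = (d i, d ⟨(i : ℕ) + 1, h⟩)} ∪
            {(d ⟨m - 1, Nat.sub_lt hm Nat.one_pos⟩, d₀)} :=
  routing_single_tour_general d₀ S hS hd₀ E hend hout hin e hMTZ
end
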